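/- arXiv:2010.08878 — 2 statements merged into one kernel-verified Lean document; each statement's English description precedes it below -/
import Mathlib

section
/- If G is an unmixed finite simple graph, then for every integer k ≥ 1, deg(J(G)^{(k)}) = k · deg(J(G)); in particular deg(J(G)^{(k)}) is a linear function of k. -/
/-!
The minimal monomial generators of `J(G)^{(k)}` are the monomials `x^m` with `m` a minimal
`k`-cover of `G`: `m a + m b ≥ k` on every edge, and every `a` with `m a > 0` has a neighbour `b`
with `m a + m b = k`. For a maximal independent set `M`, the vector equal to `k` off `M` and `0`
on `M` is one, of degree `k (n - α)`. Conversely, when `G` is unmixed every minimal `k`-cover has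
degree at most `k (n - α)`, by induction on `k` and the number of vertices. The zeros of `m`
form an independent set `F` whose neighbours all carry `k`, and `G - N[F]` is again unmixed with
independence number `α - #F`. If `m` has no zeros, `m - 1` is a minimal `(k - 2)`-cover and the
bound follows from `2 α ≤ n`, which holds for unmixed graphs without isolated vertices.
-/

open MvPolynomial

/-- `C` is a vertex cover of `G`: every edge is incident to a vertex of `C`. -/
def IsVertexCover {V : Type*} (G : SimpleGraph V) (C : Set V) : Prop :=
  ∀ ⦃a b : V⦄, G.Adj a b → a ∈ C ∨ b ∈ C

/-- `C` is a minimal vertex cover of `G`. -/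
def IsMinVertexCover {V : Type*} (G : SimpleGraph V) (C : Set V) : Prop :=
  IsVertexCover G C ∧ ∀ D : Set V, D ⊂ C → ¬ IsVertexCover G D

/-- `A` is an independent set of `G`. -/
def IsIndepSet {V : Type*} (G : SimpleGraph V) (A : Set V) : Prop :=
  ∀ ⦃a⦄, a ∈ A → ∀ ⦃b⦄, b ∈ A → ¬ G.Adj a b

/-- `A` is a maximal independent set of `G`. -/
def IsMaxIndepSet {V : Type*} (G : SimpleGraph V) (A : Set V) : Prop :=
  IsIndepSet G A ∧ ∀ B : Set V, IsIndepSet G B → A ⊆ B → A = B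

/-- A graph is unmixed if all maximal independent sets have the same cardinality. -/
def Unmixed {V : Type*} (G : SimpleGraph V) : Prop :=
  ∀ A B : Set V, IsMaxIndepSet G A → IsMaxIndepSet G B → A.ncard = B.ncard

/-- `G` has no isolated vertices. -/
def HasNoIsolatedVertex {V : Type*} (G : SimpleGraph V) : Prop :=
  ∀ v : V, ∃ w : V, G.Adj v w

/-- `G` is very well-covered: no isolated vertices, an even number of vertices, and every
maximal independent set has cardinality half the number of vertices. -/
def VeryWellCovered {V : Type*} [Fintype V] (G : SimpleGraph V) : Prop :=
  HasNoIsolatedVertex G ∧ Even (Fintype.card V) ∧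
    ∀ A : Set V, IsMaxIndepSet G A → 2 * A.ncard = Fintype.card V

/-- `G` is claw-free: it has no induced subgraph isomorphic to `K_{1,3}`. -/
def ClawFree {V : Type*} (G : SimpleGraph V) : Prop :=
  ¬ ∃ a b c d : V, G.Adj a b ∧ G.Adj a c ∧ G.Adj a d ∧
      ¬ G.Adj b c ∧ ¬ G.Adj b d ∧ ¬ G.Adj c d ∧ b ≠ c ∧ b ≠ d ∧ c ≠ d

/-- The graph obtained from `G` by deleting the vertices in `A`: it has the same vertex set,
and its edges are the edges of `G` avoiding `A` (so the vertices of `A` become isolated). -/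
def deleteVerts {V : Type*} (G : SimpleGraph V) (A : Set V) : SimpleGraph V where
  Adj a b := G.Adj a b ∧ a ∉ A ∧ b ∉ A
  symm := ⟨fun a b ⟨h1, h2, h3⟩ => ⟨h1.symm, h3, h2⟩⟩
  loopless := ⟨fun a h => G.loopless.irrefl a h.1⟩

/-- The closed neighborhood `N_G[F]` of a set of vertices `F`. -/
def closedNbhdSet {V : Type*} (G : SimpleGraph V) (F : Set V) : Set V :=
  ⋃ a ∈ F, insert a (G.neighborSet a)

/-- The cover ideal `J(G)` of the graph `G`:
the intersection of the ideals `(x_i, x_j)` over the edges `{x_i, x_j}` of `G`. -/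
noncomputable def coverIdeal (K : Type*) [Field K] {V : Type*} (G : SimpleGraph V) :
    Ideal (MvPolynomial V K) :=
  ⨅ (p : V × V) (_ : G.Adj p.1 p.2), Ideal.span {X p.1, X p.2}

/-- The `k`-th symbolic power `J(G)^{(k)}` of the cover ideal of `G`:
the intersection of the ideals `(x_i, x_j)^k` over the edges `{x_i, x_j}` of `G`
(the empty intersection being the unit ideal). -/
noncomputable def symbPow (K : Type*) [Field K] {V : Type*} (G : SimpleGraph V) (k : ℕ) :
    Ideal (MvPolynomial V K) :=
  ⨅ (p : V × V) (_ : G.Adj p.1 p.2), Ideal.span {X p.1, X p.2} ^ k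

/-- The degree of a monomial with exponent vector `m`. -/
def mdeg {V : Type*} (m : V →₀ ℕ) : ℕ := m.sum fun _ e => e

/-- The monomial with exponent vector `m` is a minimal monomial generator of `I`. -/
def IsMinGen {K : Type*} [Field K] {V : Type*} (I : Ideal (MvPolynomial V K)) (m : V →₀ ℕ) :
    Prop :=
  (monomial m (1 : K)) ∈ I ∧
    ∀ i : V, m i ≠ 0 → (monomial (m - Finsupp.single i 1) (1 : K)) ∉ I

/-- `deg I`: the maximum degree of a minimal monomial generator of `I`. -/
noncomputable def genDeg {K : Type*} [Field K] {V : Type*} (I : Ideal (MvPolynomial V K)) : ℕ :=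
  sSup {d : ℕ | ∃ m : V →₀ ℕ, IsMinGen I m ∧ mdeg m = d}

open Finset

theorem Finset.sum_eq_sum_tsub_one_add_card {ι : Type*} {A : Finset ι} {m : ι → ℕ}
    (hm : ∀ a ∈ A, m a ≠ 0) : ∑ a ∈ A, m a = ∑ a ∈ A, (m a - 1) + #A := by
  rw [card_eq_sum_ones, ← sum_add_distrib]
  exact sum_congr rfl fun a ha => by have := hm a ha; omega

namespace SimpleGraph

variable {V : Type*} (G : SimpleGraph V)

/-- A maximal independent set of the induced subgraph `G[A]`, kept inside `V` rather than
passing to the subtype of `A`. -/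
structure IsMaxIndepOn (A B : Finset V) : Prop where
  subset : B ⊆ A
  isIndepSet : G.IsIndepSet (B : Set V)
  exists_adj : ∀ v ∈ A, v ∉ B → ∃ w ∈ B, G.Adj v w

def UnmixedOn (A : Finset V) (β : ℕ) : Prop :=
  ∀ B, G.IsMaxIndepOn A B → #B = β

def nbhdWithin [DecidableEq V] [DecidableRel G.Adj] (A S : Finset V) : Finset V :=
  {v ∈ A \ S | ∃ s ∈ S, G.Adj v s}

def awayFrom [DecidableEq V] [DecidableRel G.Adj] (A S : Finset V) : Finset V :=
  {v ∈ A \ S | ¬∃ s ∈ S, G.Adj v s}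

/-- A minimal `k`-cover of `G[A]`: the second condition says that no value `m a > 0` can be
lowered without uncovering an edge at `a`. -/
structure IsMinKCoverOn (A : Finset V) (k : ℕ) (m : V → ℕ) : Prop where
  le_add : ∀ a ∈ A, ∀ b ∈ A, G.Adj a b → k ≤ m a + m b
  exists_add_le : ∀ a ∈ A, m a ≠ 0 → ∃ b ∈ A, G.Adj a b ∧ m a + m b ≤ k

variable {G} {A S : Finset V} {β k : ℕ} {m : V → ℕ}

theorem exists_isMaxIndepOn_superset {B : Finset V} (hBA : B ⊆ A)
    (hB : G.IsIndepSet (B : Set V)) : ∃ M, G.IsMaxIndepOn A M ∧ B ⊆ M := by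
  classical
  obtain ⟨M, hBM, hM⟩ :=
    (A.powerset.filter fun C : Finset V => G.IsIndepSet (C : Set V)).exists_le_maximal
      (mem_filter.mpr ⟨mem_powerset.mpr hBA, hB⟩)
  simp only [mem_filter, mem_powerset] at hM
  refine ⟨M, ⟨hM.prop.1, hM.prop.2, fun v hv hvM => ?_⟩, hBM⟩
  by_contra! hv_nadj
  have hvM_indep : G.IsIndepSet (insert v M : Finset V) := by
    rw [coe_insert]
    exact hM.prop.2.insert fun w hw _ => ⟨hv_nadj w hw, fun h => hv_nadj w hw h.symm⟩
  exact hvM (hM.le_of_ge ⟨insert_subset hv hM.prop.1, hvM_indep⟩ (subset_insert v M)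
    (mem_insert_self v M))

theorem UnmixedOn.card_le (hA : G.UnmixedOn A β) (hSA : S ⊆ A)
    (hS : G.IsIndepSet (S : Set V)) : #S ≤ β := by
  obtain ⟨M, hM, hSM⟩ := exists_isMaxIndepOn_superset hSA hS
  exact hA M hM ▸ card_le_card hSM

theorem IsMinKCoverOn.le (hm : G.IsMinKCoverOn A k m) {a : V} (ha : a ∈ A) : m a ≤ k := by
  by_cases h : m a = 0
  · omega
  · obtain ⟨b, -, -, hab⟩ := hm.exists_add_le a ha h
    omega

section Decidable

variable [DecidableEq V] [DecidableRel G.Adj]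

theorem mem_nbhdWithin {v : V} :
    v ∈ G.nbhdWithin A S ↔ v ∈ A ∧ v ∉ S ∧ ∃ s ∈ S, G.Adj v s := by
  simp [nbhdWithin, and_assoc]

theorem mem_awayFrom {v : V} :
    v ∈ G.awayFrom A S ↔ v ∈ A ∧ v ∉ S ∧ ∀ s ∈ S, ¬G.Adj v s := by
  simp [awayFrom, and_assoc]

theorem mem_nbhdWithin_singleton {v w : V} :
    w ∈ G.nbhdWithin A {v} ↔ w ∈ A ∧ G.Adj w v := by
  simp only [mem_nbhdWithin, mem_singleton, exists_eq_left]
  exact ⟨fun h => ⟨h.1, h.2.2⟩, fun h => ⟨h.1, h.2.ne, h.2⟩⟩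

theorem sum_awayFrom_add_sum_nbhdWithin_add_sum (hSA : S ⊆ A) (f : V → ℕ) :
    ∑ v ∈ G.awayFrom A S, f v + ∑ v ∈ G.nbhdWithin A S, f v + ∑ v ∈ S, f v = ∑ v ∈ A, f v := by
  rw [awayFrom, nbhdWithin, add_comm (∑ v ∈ _, f v), sum_filter_add_sum_filter_not, sum_sdiff hSA]

theorem card_awayFrom_add_card_nbhdWithin_add_card (hSA : S ⊆ A) :
    #(G.awayFrom A S) + #(G.nbhdWithin A S) + #S = #A := by
  simpa using sum_awayFrom_add_sum_nbhdWithin_add_sum (G := G) hSA 1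

theorem IsMaxIndepOn.union_of_awayFrom {W : Finset V} (hSA : S ⊆ A)
    (hS : G.IsIndepSet (S : Set V)) (hW : G.IsMaxIndepOn (G.awayFrom A S) W) :
    G.IsMaxIndepOn A (S ∪ W) := by
  have hWaway : ∀ w ∈ W, w ∈ A ∧ w ∉ S ∧ ∀ s ∈ S, ¬G.Adj w s :=
    fun w hw => mem_awayFrom.mp (hW.subset hw)
  refine ⟨union_subset hSA fun w hw => (hWaway w hw).1, ?_, fun v hv hvSW => ?_⟩
  · rw [coe_union]
    exact Set.pairwise_union.mpr ⟨hS, hW.isIndepSet, fun s hs w hw _ =>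
      ⟨fun h => (hWaway w hw).2.2 s hs h.symm, (hWaway w hw).2.2 s hs⟩⟩
  · rw [mem_union, not_or] at hvSW
    by_cases hvS : ∃ s ∈ S, G.Adj v s
    · obtain ⟨s, hs, hvs⟩ := hvS
      exact ⟨s, mem_union_left W hs, hvs⟩
    · obtain ⟨w, hw, hvw⟩ :=
        hW.exists_adj v (mem_awayFrom.mpr ⟨hv, hvSW.1, by simpa using hvS⟩) hvSW.2
      exact ⟨w, mem_union_right S hw, hvw⟩

theorem awayFrom_ssubset (hSA : S ⊆ A) (hS : S.Nonempty) : G.awayFrom A S ⊂ A := by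
  obtain ⟨s, hs⟩ := hS
  exact ssubset_of_subset_of_ne (fun v hv => (mem_awayFrom.mp hv).1)
    fun h => (mem_awayFrom.mp (h ▸ hSA hs)).2.1 hs

theorem UnmixedOn.awayFrom (hA : G.UnmixedOn A β) (hSA : S ⊆ A)
    (hS : G.IsIndepSet (S : Set V)) : G.UnmixedOn (G.awayFrom A S) (β - #S) := by
  intro W hW
  have hdisj : Disjoint S W :=
    Finset.disjoint_right.mpr fun w hw => (mem_awayFrom.mp (hW.subset hw)).2.1
  have := hA _ (hW.union_of_awayFrom hSA hS)
  rw [card_union_of_disjoint hdisj] at this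
  omega

/-- `(M \ N(S)) ∪ S` is independent, hence no larger than `M`. -/
theorem UnmixedOn.card_le_card_nbhdWithin (hA : G.UnmixedOn A β) (hSA : S ⊆ A)
    (hS : G.IsIndepSet (S : Set V)) {M : Finset V} (hM : G.IsMaxIndepOn A M)
    (hMS : Disjoint M S) : #S ≤ #(G.nbhdWithin A S) := by
  set N := G.nbhdWithin A S
  have hindep : G.IsIndepSet ((M \ N ∪ S : Finset V) : Set V) := by
    rw [coe_union]
    refine Set.pairwise_union.mpr ⟨hM.isIndepSet.mono (by simp), hS, fun v hv s hs _ => ?_⟩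
    have hvN : v ∉ N := (mem_sdiff.mp hv).2
    have hvS : v ∉ S := Finset.disjoint_left.mp hMS (mem_sdiff.mp hv).1
    have hvA : v ∈ A := hM.subset (mem_sdiff.mp hv).1
    exact ⟨fun h => hvN (mem_nbhdWithin.mpr ⟨hvA, hvS, s, hs, h⟩),
      fun h => hvN (mem_nbhdWithin.mpr ⟨hvA, hvS, s, hs, h.symm⟩)⟩
  have hle := hA.card_le (union_subset (sdiff_subset.trans hM.subset) hSA) hindep
  rw [card_union_of_disjoint (disjoint_of_subset_left sdiff_subset hMS), ← hA M hM,
    ← card_sdiff_add_card_inter M N] at hle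
  have := card_le_card (inter_subset_right : M ∩ N ⊆ N)
  omega

/-- `S` is the set of vertices whose neighbourhood lies in that of a vertex `u` of minimum
degree; these neighbourhoods then all equal `N(u)`, and the exchange lemma bounds `#S`. -/
theorem UnmixedOn.exists_isIndepSet_card_le_card_nbhdWithin (hA : G.UnmixedOn A β)
    (hiso : ∀ v ∈ A, ∃ w ∈ A, G.Adj v w) (hne : A.Nonempty) :
    ∃ S ⊆ A, S.Nonempty ∧ G.IsIndepSet (S : Set V) ∧ #S ≤ #(G.nbhdWithin A S) ∧
      ∀ v ∈ G.awayFrom A S, ∃ w ∈ G.awayFrom A S, G.Adj v w := by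
  obtain ⟨u, hu, hmin⟩ := A.exists_min_image (fun v => #(G.nbhdWithin A {v})) hne
  set NB := G.nbhdWithin A {u}
  set S := {v ∈ A | G.nbhdWithin A {v} ⊆ NB}
  have hSA : S ⊆ A := filter_subset _ _
  have huS : u ∈ S := mem_filter.mpr ⟨hu, subset_rfl⟩
  have hnbhd_eq : ∀ s ∈ S, G.nbhdWithin A {s} = NB := fun s hs =>
    eq_of_subset_of_card_le (mem_filter.mp hs).2 (hmin s (mem_filter.mp hs).1)
  have hmem_NB : ∀ s ∈ S, ∀ w ∈ A, G.Adj w s → w ∈ NB := fun s hs w hw hws =>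
    (mem_filter.mp hs).2 (mem_nbhdWithin_singleton.mpr ⟨hw, hws⟩)
  have hNB_S : ∀ w ∈ NB, w ∉ S := fun w hw hwS =>
    G.loopless.irrefl u (mem_nbhdWithin_singleton.mp
      (hmem_NB w hwS u hu (mem_nbhdWithin_singleton.mp hw).2.symm)).2
  have hS : G.IsIndepSet (S : Set V) := fun s hs t ht _ hst =>
    hNB_S t (hmem_NB s hs t (hSA ht) hst.symm) ht
  have hN : G.nbhdWithin A S = NB := by
    ext v
    refine ⟨fun hv => ?_, fun hv => ?_⟩
    · obtain ⟨hvA, -, s, hs, hvs⟩ := mem_nbhdWithin.mp hv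
      exact hmem_NB s hs v hvA hvs
    · have := mem_nbhdWithin_singleton.mp hv
      exact mem_nbhdWithin.mpr ⟨this.1, hNB_S v hv, u, huS, this.2⟩
  refine ⟨S, hSA, ⟨u, huS⟩, hS, ?_, fun v hv => ?_⟩
  · obtain ⟨b, hbA, hub⟩ := hiso u hu
    obtain ⟨M, hM, hbM⟩ := exists_isMaxIndepOn_superset (G := G)
      (singleton_subset_iff.mpr hbA) (by simp)
    have hbNB : b ∈ NB := mem_nbhdWithin_singleton.mpr ⟨hbA, hub.symm⟩
    have hMS : Disjoint M S := Finset.disjoint_right.mpr fun s hs hsM => by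
      rw [← hnbhd_eq s hs, mem_nbhdWithin_singleton] at hbNB
      exact hM.isIndepSet (hbM (mem_singleton_self b)) hsM hbNB.2.ne hbNB.2
    exact hA.card_le_card_nbhdWithin hSA hS hM hMS
  · obtain ⟨hvA, hvS, hvS'⟩ := mem_awayFrom.mp hv
    obtain ⟨w, hw, hwNB⟩ := not_subset.mp fun h => hvS (mem_filter.mpr ⟨hvA, h⟩)
    obtain ⟨hwA, hwv⟩ := mem_nbhdWithin_singleton.mp hw
    refine ⟨w, mem_awayFrom.mpr ⟨hwA, fun hwS => hvS' w hwS hwv.symm, fun s hs hws => ?_⟩,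
      hwv.symm⟩
    exact hwNB (hmem_NB s hs w hwA hws)

theorem IsMinKCoverOn.eq_of_mem_nbhdWithin (hm : G.IsMinKCoverOn A k m) {F : Finset V}
    (hFA : F ⊆ A) (hF : ∀ a ∈ F, m a = 0) {v : V} (hv : v ∈ G.nbhdWithin A F) : m v = k := by
  obtain ⟨hvA, -, a, ha, hva⟩ := mem_nbhdWithin.mp hv
  have := hm.le_add v hvA a (hFA ha) hva
  have := hm.le hvA
  have := hF a ha
  omega

theorem IsMinKCoverOn.sum_eq_sum_awayFrom_add (hm : G.IsMinKCoverOn A k m) {F : Finset V}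
    (hFA : F ⊆ A) (hF : ∀ a ∈ F, m a = 0) :
    ∑ a ∈ A, m a = ∑ a ∈ G.awayFrom A F, m a + k * #(G.nbhdWithin A F) := by
  rw [← sum_awayFrom_add_sum_nbhdWithin_add_sum (G := G) hFA, sum_eq_zero hF,
    sum_congr rfl fun v hv => hm.eq_of_mem_nbhdWithin hFA hF hv, sum_const, smul_eq_mul,
    mul_comm, add_zero]

theorem IsMinKCoverOn.awayFrom (hm : G.IsMinKCoverOn A k m) {F : Finset V} (hFA : F ⊆ A)
    (hF : ∀ a ∈ F, m a = 0) : G.IsMinKCoverOn (G.awayFrom A F) k m := by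
  have hsub : G.awayFrom A F ⊆ A := fun v hv => (mem_awayFrom.mp hv).1
  refine ⟨fun a ha b hb hab => hm.le_add a (hsub ha) b (hsub hb) hab, fun a ha hma => ?_⟩
  obtain ⟨haA, -, ha0⟩ := mem_awayFrom.mp ha
  obtain ⟨b, hbA, hab, hle⟩ := hm.exists_add_le a haA hma
  refine ⟨b, mem_awayFrom.mpr ⟨hbA, fun hb => ha0 b hb hab, fun c hc hbc => ?_⟩, hab, hle⟩
  have := hm.le_add b hbA c (hFA hc) hbc
  have := hF c hc
  omega

end Decidable

theorem UnmixedOn.two_mul_le_card (hA : G.UnmixedOn A β)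
    (hiso : ∀ v ∈ A, ∃ w ∈ A, G.Adj v w) : 2 * β ≤ #A := by
  classical
  induction A using Finset.strongInduction generalizing β with
  | H A ih =>
  rcases A.eq_empty_or_nonempty with rfl | hne
  · simp [← hA ∅ ⟨subset_rfl, by simp, by simp⟩]
  obtain ⟨S, hSA, hSne, hS, hSN, hiso'⟩ := hA.exists_isIndepSet_card_le_card_nbhdWithin hiso hne
  have hrec := ih _ (awayFrom_ssubset hSA hSne) (hA.awayFrom hSA hS) hiso'
  have hcard := card_awayFrom_add_card_nbhdWithin_add_card (G := G) hSA
  have hSβ := hA.card_le hSA hS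
  omega

theorem IsMaxIndepOn.isMinKCoverOn [DecidableEq V] {M : Finset V} (hM : G.IsMaxIndepOn A M)
    (k : ℕ) : G.IsMinKCoverOn A k fun v => if v ∈ M then 0 else k := by
  refine ⟨fun a _ b _ hab => ?_, fun a ha hka => ?_⟩
  · by_cases haM : a ∈ M
    · by_cases hbM : b ∈ M
      · exact (hM.isIndepSet haM hbM hab.ne hab).elim
      · simp [hbM]
    · simp [haM]
  · have haM : a ∉ M := fun h => hka (if_pos h)
    obtain ⟨w, hwM, haw⟩ := hM.exists_adj a ha haM
    exact ⟨w, hM.subset hwM, haw, by simp [haM, hwM]⟩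

theorem IsMinKCoverOn.isIndepSet_of_eq_zero (hm : G.IsMinKCoverOn A k m) (hk : 0 < k)
    {F : Finset V} (hFA : F ⊆ A) (hF : ∀ a ∈ F, m a = 0) : G.IsIndepSet (F : Set V) :=
  fun a ha b hb _ hab => by
    have := hm.le_add a (hFA ha) b (hFA hb) hab
    have := hF a ha
    have := hF b hb
    omega

theorem IsMinKCoverOn.tsub_one (hm : G.IsMinKCoverOn A k m) (hpos : ∀ a ∈ A, m a ≠ 0) :
    G.IsMinKCoverOn A (k - 2) (fun a => m a - 1) := by
  refine ⟨fun a ha b hb hab => ?_, fun a ha _ => ?_⟩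
  · have := hm.le_add a ha b hb hab
    omega
  · obtain ⟨b, hbA, hab, hle⟩ := hm.exists_add_le a ha (hpos a ha)
    have := hpos b hbA
    exact ⟨b, hbA, hab, by omega⟩

theorem IsMinKCoverOn.sum_add_mul_le (hm : G.IsMinKCoverOn A k m) (hA : G.UnmixedOn A β) :
    ∑ a ∈ A, m a + k * β ≤ k * #A := by
  classical
  induction k using Nat.strong_induction_on generalizing A β m with
  | _ k ihk =>
  induction A using Finset.strongInduction generalizing β with
  | H A ihA =>
  rcases Nat.eq_zero_or_pos k with rfl | hk
  · simp [sum_eq_zero fun a ha => Nat.le_zero.mp (hm.le ha)]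
  by_cases hzero : ∃ a ∈ A, m a = 0
  · set F := {a ∈ A | m a = 0}
    have hFA : F ⊆ A := filter_subset _ _
    have hF0 : ∀ a ∈ F, m a = 0 := fun a ha => (mem_filter.mp ha).2
    have hF := hm.isIndepSet_of_eq_zero hk hFA hF0
    have hFne : F.Nonempty := by
      obtain ⟨a, ha, ha0⟩ := hzero
      exact ⟨a, mem_filter.mpr ⟨ha, ha0⟩⟩
    have hrec := ihA _ (awayFrom_ssubset hFA hFne) (hm.awayFrom hFA hF0) (hA.awayFrom hFA hF)
    have hcard := card_awayFrom_add_card_nbhdWithin_add_card (G := G) hFA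
    obtain ⟨β', rfl⟩ := Nat.exists_eq_add_of_le' (hA.card_le hFA hF)
    rw [Nat.add_sub_cancel] at hrec
    rw [hm.sum_eq_sum_awayFrom_add hFA hF0, ← hcard]
    nlinarith
  · push Not at hzero
    have h2β := hA.two_mul_le_card fun a ha => by
      obtain ⟨b, hb, hab, -⟩ := hm.exists_add_le a ha (hzero a ha)
      exact ⟨b, hb, hab⟩
    rcases A.eq_empty_or_nonempty with rfl | ⟨a, ha⟩
    · simp_all
    have hk2 : 2 ≤ k := by
      obtain ⟨b, hb, -, hab⟩ := hm.exists_add_le a ha (hzero a ha)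
      have := hzero a ha
      have := hzero b hb
      omega
    have hrec := ihk (k - 2) (by omega) (hm.tsub_one hzero) hA
    obtain ⟨j, rfl⟩ := Nat.exists_eq_add_of_le' hk2
    rw [Nat.add_sub_cancel] at hrec
    rw [sum_eq_sum_tsub_one_add_card hzero]
    nlinarith

theorem IsMaxIndepOn.isMaxIndepSet [Fintype V] {M : Finset V} (hM : G.IsMaxIndepOn univ M) :
    IsMaxIndepSet G (M : Set V) := by
  refine ⟨fun a ha b hb hab => hM.isIndepSet ha hb hab.ne hab, fun B hB hMB => ?_⟩
  refine hMB.antisymm fun v hvB => ?_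
  by_contra hvM
  obtain ⟨w, hwM, hvw⟩ := hM.exists_adj v (mem_univ v) hvM
  exact hB hvB (hMB hwM) hvw

end SimpleGraph

section MonomialIdeals

variable {K : Type*} [Field K] {V : Type*}

theorem aeval_monomial_pair [DecidableEq V] {a b : V} (hab : a ≠ b) (m : V →₀ ℕ) :
    aeval (fun v => if v = a ∨ v = b then (Polynomial.X : Polynomial K) else 1)
      (monomial m (1 : K)) = Polynomial.X ^ (m a + m b) := by
  rw [aeval_monomial, map_one, one_mul,
    Finsupp.prod_of_support_subset m (subset_union_left (s₂ := {a, b})) _ (fun _ _ => pow_zero _),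
    ← prod_subset (subset_union_right (s₁ := m.support)) (fun v _ hv => by simp_all),
    prod_pair hab]
  simp [pow_add]

theorem monomial_mem_span_X_pair_pow_iff {a b : V} (hab : a ≠ b) (m : V →₀ ℕ) (k : ℕ) :
    monomial m (1 : K) ∈ Ideal.span {X a, X b} ^ k ↔ k ≤ m a + m b := by
  classical
  set I : Ideal (MvPolynomial V K) := Ideal.span {X a, X b}
  constructor
  · intro hm
    let φ := aeval (R := K) fun v => if v = a ∨ v = b then (Polynomial.X : Polynomial K) else 1
    have hI : I.map φ = Ideal.span {Polynomial.X} := by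
      simp [I, φ, Ideal.map_span, Set.image_pair]
    have := Ideal.mem_map_of_mem φ hm
    rw [Ideal.map_pow, hI, Ideal.span_singleton_pow, Ideal.mem_span_singleton,
      aeval_monomial_pair hab] at this
    exact (pow_dvd_pow_iff Polynomial.X_ne_zero Polynomial.not_isUnit_X).mp this
  · intro hk
    have hmem : X a ^ m a * X b ^ m b ∈ I ^ k :=
      Ideal.pow_le_pow_right hk (pow_add I _ _ ▸
        Ideal.mul_mem_mul (Ideal.pow_mem_pow (Ideal.subset_span (by simp)) _)
          (Ideal.pow_mem_pow (Ideal.subset_span (by simp)) _))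
    refine Ideal.mem_of_dvd _ ?_ hmem
    rw [X_pow_eq_monomial, X_pow_eq_monomial, monomial_mul, one_mul, monomial_dvd_monomial]
    refine ⟨Or.inr fun v => ?_, dvd_rfl⟩
    by_cases hva : v = a <;> by_cases hvb : v = b <;> simp_all [Finsupp.single_apply, eq_comm]

theorem monomial_mem_symbPow_iff (G : SimpleGraph V) (k : ℕ) (m : V →₀ ℕ) :
    monomial m (1 : K) ∈ symbPow K G k ↔ ∀ a b, G.Adj a b → k ≤ m a + m b := by
  simp only [symbPow, Ideal.mem_iInf, Prod.forall]
  exact forall₃_congr fun a b hab => monomial_mem_span_X_pair_pow_iff hab.ne m k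

theorem coverIdeal_eq_symbPow_one (G : SimpleGraph V) : coverIdeal K G = symbPow K G 1 := by
  simp [coverIdeal, symbPow]

theorem isMinGen_symbPow_iff [Fintype V] (G : SimpleGraph V) (k : ℕ) (m : V →₀ ℕ) :
    IsMinGen (symbPow K G k) m ↔ G.IsMinKCoverOn univ k m := by
  classical
  simp only [IsMinGen, monomial_mem_symbPow_iff, not_forall, not_le]
  refine ⟨fun ⟨hm, hmin⟩ => ⟨fun a _ b _ => hm a b, fun i _ hi => ?_⟩,
    fun ⟨hm, hmin⟩ => ⟨fun a b => hm a (mem_univ a) b (mem_univ b), fun i hi => ?_⟩⟩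
  · obtain ⟨a, b, hab, hlt⟩ := hmin i hi
    have := hm a b hab
    simp only [Finsupp.tsub_apply, Finsupp.single_apply] at hlt
    by_cases hia : i = a
    · subst hia
      simp only [if_neg hab.ne, if_true] at hlt
      exact ⟨b, mem_univ b, hab, by omega⟩
    · by_cases hib : i = b
      · subst hib
        simp only [if_neg hia, if_true] at hlt
        exact ⟨a, mem_univ a, hab.symm, by omega⟩
      · simp only [if_neg hia, if_neg hib] at hlt
        omega
  · obtain ⟨j, -, hij, hle⟩ := hmin i (mem_univ i) hi
    refine ⟨i, j, hij, ?_⟩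
    simp only [Finsupp.tsub_apply, Finsupp.single_apply, if_true, if_neg hij.ne]
    omega

theorem genDeg_symbPow_eq [Fintype V] {G : SimpleGraph V} {M : Finset V}
    (hM : G.IsMaxIndepOn univ M) (hG : G.UnmixedOn univ #M) (k : ℕ) :
    genDeg (symbPow K G k) = k * (Fintype.card V - #M) := by
  classical
  have hmdeg : ∀ m : V →₀ ℕ, mdeg m = ∑ v, m v := fun m => Finsupp.sum_fintype _ _ fun _ => rfl
  refine IsGreatest.csSup_eq ⟨?_, ?_⟩
  · refine ⟨Finsupp.equivFunOnFinite.symm fun v => if v ∈ M then 0 else k, ?_, ?_⟩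
    · rw [isMinGen_symbPow_iff, Finsupp.coe_equivFunOnFinite_symm]
      exact hM.isMinKCoverOn k
    · simp [hmdeg, sum_ite, filter_not, card_sdiff, mul_comm]
  · rintro _ ⟨m, hm, rfl⟩
    have := ((isMinGen_symbPow_iff G k m).mp hm).sum_add_mul_le hG
    rw [hmdeg, Nat.mul_sub, ← card_univ]
    omega

end MonomialIdeals

theorem statement1_general {V : Type*} [Fintype V] (K : Type*) [Field K] (G : SimpleGraph V)
    (hG : Unmixed G) (k : ℕ) :
    genDeg (symbPow K G k) = k * genDeg (coverIdeal K G) := by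
  obtain ⟨M, hM, -⟩ := G.exists_isMaxIndepOn_superset (empty_subset univ) (by simp)
  have hU : G.UnmixedOn univ #M := fun B hB => by
    simpa using hG _ _ hB.isMaxIndepSet hM.isMaxIndepSet
  rw [coverIdeal_eq_symbPow_one, genDeg_symbPow_eq hM hU, genDeg_symbPow_eq hM hU, one_mul]

/-- Corollary `deguc`, unmixed case: if `G` is an unmixed finite simple
graph, then `deg (J(G)^{(k)}) = k * deg (J(G))` for every `k ≥ 1`; in particular,
`deg (J(G)^{(k)})` is a linear function of `k`. -/
theorem statement1 {V : Type*} [Fintype V] (K : Type*) [Field K] (G : SimpleGraph V)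
    (hG : Unmixed G) (k : ℕ) (hk : 1 ≤ k) :
    genDeg (symbPow K G k) = k * genDeg (coverIdeal K G) :=
  statement1_general K G hG k
end

section
/- Let G be an unmixed finite simple graph with n vertices and no isolated vertices. Then every minimal vertex cover of G has cardinality at least n/2; equivalently, every maximal independent set of G has cardinality at most n/2. -/
open MvPolynomial

/-!
Let `A` be a maximal independent set. For an independent set `W` outside `A`, the set
`W ∪ (A \ N(W))` is independent, so unmixedness gives `|W| ≤ |A ∩ N(W)|`, with equality when
`W` dominates `Aᶜ`, since that set is then maximal. From this one shows that every `S ⊆ A` whose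
neighbourhood lies in some `T ⊆ Aᶜ` satisfies `|S| ≤ |T|`, by induction on `T`: take a maximal
independent subset `U` of `T` and extend it to an independent set `W` dominating `Aᶜ` with
`W ∩ T = U`; comparing the two inequalities for `W` and `W \ U` bounds `|S ∩ N(U)|` by `|U|`,
and `S \ N(U)` has its neighbourhood in `T \ U`. Since there are no isolated vertices the
induction starts at `T = ∅`, and `S = A`, `T = Aᶜ` gives `|A| ≤ n - |A|`.
-/

section

variable {V : Type*} {G : SimpleGraph V}

def openNbhd (G : SimpleGraph V) (U : Set V) : Set V := {x | ∃ u ∈ U, G.Adj x u}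

lemma openNbhd_mono {U W : Set V} (h : U ⊆ W) : openNbhd G U ⊆ openNbhd G W :=
  fun _ ⟨u, hu, hadj⟩ => ⟨u, h hu, hadj⟩

lemma isIndepSet_singleton (v : V) : IsIndepSet G {v} := by
  rintro _ rfl _ rfl
  exact G.loopless.irrefl _

lemma IsIndepSet.mono {U W : Set V} (h : U ⊆ W) (hW : IsIndepSet G W) : IsIndepSet G U :=
  fun _ ha _ hb => hW (h ha) (h hb)

lemma IsIndepSet.union {U W : Set V} (hU : IsIndepSet G U) (hW : IsIndepSet G W)
    (hUW : ∀ u ∈ U, ∀ w ∈ W, ¬ G.Adj u w) : IsIndepSet G (U ∪ W) := by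
  rintro a (ha | ha) b (hb | hb) hab
  · exact hU ha hb hab
  · exact hUW a ha b hb hab
  · exact hUW b hb a ha hab.symm
  · exact hW ha hb hab

lemma IsIndepSet.union_sdiff_openNbhd {A U : Set V} (hA : IsIndepSet G A)
    (hU : IsIndepSet G U) : IsIndepSet G (U ∪ (A \ openNbhd G U)) :=
  hU.union (hA.mono Set.sdiff_subset) fun u hu _ ha hadj => ha.2 ⟨u, hu, hadj.symm⟩

lemma isMaxIndepSet_of_forall_exists_adj {B : Set V} (hB : IsIndepSet G B)
    (hdom : ∀ v ∉ B, ∃ b ∈ B, G.Adj v b) : IsMaxIndepSet G B := by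
  refine ⟨hB, fun B' hB' hBB' => hBB'.antisymm fun v hv => ?_⟩
  by_contra hvB
  obtain ⟨b, hb, hadj⟩ := hdom v hvB
  exact hB' hv (hBB' hb) hadj

lemma exists_adj_of_maximal {T U : Set V}
    (hU : Maximal (fun U => U ⊆ T ∧ IsIndepSet G U) U) {v : V} (hvT : v ∈ T) (hvU : v ∉ U) :
    ∃ u ∈ U, G.Adj v u := by
  by_contra! hno
  have hindep : IsIndepSet G ({v} ∪ U) :=
    (isIndepSet_singleton v).union hU.prop.2 fun _ hv' u hu => hv' ▸ hno u hu
  exact hvU (hU.le_of_ge ⟨Set.union_subset (Set.singleton_subset_iff.2 hvT) hU.prop.1, hindep⟩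
    Set.subset_union_right (Set.mem_union_left U rfl))

lemma IsMinVertexCover.isMaxIndepSet_compl {C : Set V} (hC : IsMinVertexCover G C) :
    IsMaxIndepSet G Cᶜ := by
  refine ⟨fun a ha b hb hab => (hC.1 hab).elim ha hb,
    fun B hB hCB => hCB.antisymm fun v hvB => ?_⟩
  by_contra hv
  rw [Set.notMem_compl_iff] at hv
  have hnot := hC.2 (C \ {v}) (Set.sdiff_singleton_ssubset.2 hv)
  simp only [IsVertexCover, not_forall, not_or] at hnot
  obtain ⟨a, b, hab, ha, hb⟩ := hnot
  have hsub : (C \ {v})ᶜ ⊆ B := by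
    rw [Set.compl_sdiff]
    exact Set.union_subset (Set.singleton_subset_iff.2 hvB) hCB
  exact hB (hsub ha) (hsub hb) hab

variable [Finite V]

lemma exists_isMaxIndepSet_superset {W : Set V} (hW : IsIndepSet G W) :
    ∃ B, W ⊆ B ∧ IsMaxIndepSet G B := by
  obtain ⟨B, hWB, hB⟩ := Finite.exists_le_maximal hW
  exact ⟨B, hWB, hB.prop, fun B' hB' hBB' => hBB'.antisymm (hB.le_of_ge hB' hBB')⟩

lemma ncard_union_sdiff_openNbhd_add {A W : Set V} (hWA : W ⊆ Aᶜ) :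
    (W ∪ (A \ openNbhd G W)).ncard + (A ∩ openNbhd G W).ncard = W.ncard + A.ncard := by
  have hdisj : Disjoint W (A \ openNbhd G W) :=
    Set.disjoint_left.2 fun _ hw ha => hWA hw ha.1
  rw [Set.ncard_union_eq hdisj, ← Set.ncard_inter_add_ncard_sdiff_eq_ncard A (openNbhd G W)]
  omega

variable {A : Set V}

lemma Unmixed.ncard_le_ncard_inter_openNbhd (hG : Unmixed G) (hA : IsMaxIndepSet G A)
    {W : Set V} (hWA : W ⊆ Aᶜ) (hW : IsIndepSet G W) :
    W.ncard ≤ (A ∩ openNbhd G W).ncard := by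
  obtain ⟨B, hWB, hB⟩ := exists_isMaxIndepSet_superset (hA.1.union_sdiff_openNbhd hW)
  have hle := Set.ncard_le_ncard hWB
  have hcount := ncard_union_sdiff_openNbhd_add (G := G) hWA
  rw [hG B A hB hA] at hle
  omega

lemma Unmixed.ncard_inter_openNbhd_le (hG : Unmixed G) (hA : IsMaxIndepSet G A)
    {W : Set V} (hWA : W ⊆ Aᶜ) (hW : IsIndepSet G W)
    (hdom : ∀ v ∈ Aᶜ, v ∉ W → ∃ w ∈ W, G.Adj v w) :
    (A ∩ openNbhd G W).ncard ≤ W.ncard := by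
  have hB : IsMaxIndepSet G (W ∪ (A \ openNbhd G W)) := by
    refine isMaxIndepSet_of_forall_exists_adj (hA.1.union_sdiff_openNbhd hW) fun v hv => ?_
    by_cases hvA : v ∈ A
    · have hvN : v ∈ openNbhd G W := by_contra fun h => hv (Or.inr ⟨hvA, h⟩)
      obtain ⟨w, hw, hadj⟩ := hvN
      exact ⟨w, Or.inl hw, hadj⟩
    · obtain ⟨w, hw, hadj⟩ := hdom v hvA fun h => hv (Or.inl h)
      exact ⟨w, Or.inl hw, hadj⟩
  have hcount := ncard_union_sdiff_openNbhd_add (G := G) hWA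
  rw [hG _ A hB hA] at hcount
  omega

lemma Unmixed.ncard_inter_openNbhd_le_of_maximal (hG : Unmixed G) (hA : IsMaxIndepSet G A)
    {S T U : Set V} (hTA : T ⊆ Aᶜ) (hU : Maximal (fun U => U ⊆ T ∧ IsIndepSet G U) U)
    (hSA : S ⊆ A) (hST : openNbhd G S ⊆ T) :
    (S ∩ openNbhd G U).ncard ≤ U.ncard := by
  obtain ⟨W, hUW, hW⟩ := Finite.exists_le_maximal
    (p := fun W => W ⊆ Aᶜ \ (T \ U) ∧ IsIndepSet G W)
    ⟨fun u hu => ⟨hTA (hU.prop.1 hu), fun h => h.2 hu⟩, hU.prop.2⟩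
  have hWA : W ⊆ Aᶜ := hW.prop.1.trans Set.sdiff_subset
  have hWdom : ∀ v ∈ Aᶜ, v ∉ W → ∃ w ∈ W, G.Adj v w := by
    intro v hvA hvW
    by_cases hv : v ∈ T \ U
    · obtain ⟨u, hu, hadj⟩ := exists_adj_of_maximal hU hv.1 hv.2
      exact ⟨u, hUW hu, hadj⟩
    · exact exists_adj_of_maximal hW ⟨hvA, hv⟩ hvW
  have hW_le := hG.ncard_inter_openNbhd_le hA hWA hW.prop.2 hWdom
  have hWU_le := hG.ncard_le_ncard_inter_openNbhd hA (Set.sdiff_subset.trans hWA)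
    (hW.prop.2.mono (Set.sdiff_subset (t := U)))
  -- `W \ U` avoids `T`, where all neighbours of `S` lie
  have hdisj : Disjoint (S ∩ openNbhd G U) (A ∩ openNbhd G (W \ U)) := by
    refine Set.disjoint_left.2 fun s ⟨hs, _⟩ ⟨_, w, hw, hadj⟩ => ?_
    exact (hW.prop.1 hw.1).2 ⟨hST ⟨s, hs, hadj.symm⟩, hw.2⟩
  have hsub : S ∩ openNbhd G U ∪ A ∩ openNbhd G (W \ U) ⊆ A ∩ openNbhd G W :=
    Set.union_subset (fun s hs => ⟨hSA hs.1, openNbhd_mono hUW hs.2⟩)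
      fun a ha => ⟨ha.1, openNbhd_mono Set.sdiff_subset ha.2⟩
  have hsum := Set.ncard_le_ncard hsub
  rw [Set.ncard_union_eq hdisj] at hsum
  have hW_split := Set.ncard_sdiff_add_ncard_of_subset hUW
  omega

lemma Unmixed.ncard_le_of_openNbhd_subset (hG : Unmixed G) (hiso : HasNoIsolatedVertex G)
    (hA : IsMaxIndepSet G A) {T : Set V} (hTA : T ⊆ Aᶜ) {S : Set V} (hSA : S ⊆ A)
    (hST : openNbhd G S ⊆ T) : S.ncard ≤ T.ncard := by
  induction T using WellFoundedLT.induction generalizing S with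
  | _ T ih =>
  rcases T.eq_empty_or_nonempty with rfl | ⟨t, ht⟩
  · have hS : S = ∅ := Set.eq_empty_of_forall_notMem fun s hs => by
      obtain ⟨w, hw⟩ := hiso s
      exact hST ⟨s, hs, hw.symm⟩
    simp [hS]
  obtain ⟨U, htU, hU⟩ := Finite.exists_le_maximal (p := fun U => U ⊆ T ∧ IsIndepSet G U)
    ⟨Set.singleton_subset_iff.2 ht, isIndepSet_singleton t⟩
  have hTU : T \ U < T := Set.sdiff_ssubset_left_iff.2 ⟨t, ht, htU rfl⟩
  have hnear := hG.ncard_inter_openNbhd_le_of_maximal hA hTA hU hSA hST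
  have hfar : (S \ openNbhd G U).ncard ≤ (T \ U).ncard := by
    refine ih _ hTU (Set.sdiff_subset.trans hTA) (Set.sdiff_subset.trans hSA) ?_
    rintro x ⟨s, hs, hadj⟩
    exact ⟨hST ⟨s, hs.1, hadj⟩, fun hx => hs.2 ⟨x, hx, hadj.symm⟩⟩
  have hS_split := Set.ncard_inter_add_ncard_sdiff_eq_ncard S (openNbhd G U)
  have hT_split := Set.ncard_sdiff_add_ncard_of_subset hU.prop.1
  omega

lemma Unmixed.two_mul_ncard_le [Fintype V] (hG : Unmixed G) (hiso : HasNoIsolatedVertex G)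
    (hA : IsMaxIndepSet G A) : 2 * A.ncard ≤ Fintype.card V := by
  have hle : A.ncard ≤ Aᶜ.ncard := hG.ncard_le_of_openNbhd_subset hiso hA subset_rfl subset_rfl
    fun x ⟨a, ha, hadj⟩ hx => hA.1 hx ha hadj
  have hsplit := Set.ncard_add_ncard_compl A
  rw [Nat.card_eq_fintype_card] at hsplit
  omega

end

/-- in an unmixed finite simple graph without isolated vertices, every
minimal vertex cover has cardinality at least `n/2`; equivalently, every maximal independent
set has cardinality at most `n/2`. -/
theorem statement8 {V : Type*} [Fintype V] (G : SimpleGraph V) (hG : Unmixed G)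
    (hiso : HasNoIsolatedVertex G) :
    (∀ C : Set V, IsMinVertexCover G C → Fintype.card V ≤ 2 * C.ncard) ∧
    (∀ A : Set V, IsMaxIndepSet G A → 2 * A.ncard ≤ Fintype.card V) := by
  refine ⟨fun C hC => ?_, fun A hA => hG.two_mul_ncard_le hiso hA⟩
  have hle := hG.two_mul_ncard_le hiso hC.isMaxIndepSet_compl
  have hsplit := Set.ncard_add_ncard_compl C
  rw [Nat.card_eq_fintype_card] at hsplit
  omega
end
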